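/- Deterministic ℓ1 estimation bound (core of Theorem 2): under the same hypotheses as the deterministic ℓ2 estimation bound — β̂ a global minimizer of L(β) + λ‖β‖₁ with λ > 0, β* supported on S with |S| = s ≥ 1, λ ≥ 2‖ξ‖_∞, restricted strong convexity Δᵀ G Δ ≥ α‖Δ‖₂² − κ‖Δ‖₁² on the cone ‖Δ_{S^c}‖₁ ≤ 3‖Δ_S‖₁ with α > 0, κ ≥ 0, and 16 κ s ≤ α/2 — one has ‖β̂ − β*‖₁ ≤ 24 λ s / α. -/

import Mathlib

/-!
Write `Δ = β̂ - β*`. Since the loss is quadratic, `L β̂ = L β* + ξ ⬝ᵥ Δ + ½ Δᵀ G Δ`, so comparing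
`β̂` with `β*`, bounding `|ξ ⬝ᵥ Δ| ≤ ‖ξ‖∞ ‖Δ‖₁ ≤ (λ/2) ‖Δ‖₁` and using that `β*` vanishes off `S`
gives the basic inequality `½ Δᵀ G Δ ≤ (λ/2) ‖Δ‖₁ + λ (‖Δ_S‖₁ - ‖Δ_Sᶜ‖₁)`. As `G` is positive
semidefinite, this puts `Δ` in the cone `‖Δ_Sᶜ‖₁ ≤ 3 ‖Δ_S‖₁` and gives `Δᵀ G Δ ≤ 3λ ‖Δ_S‖₁`.
On the cone `‖Δ‖₁² ≤ 16 ‖Δ_S‖₁² ≤ 16 s ‖Δ‖₂²`, so `16 κ s ≤ α/2` absorbs the `κ`-term of restricted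
strong convexity: `(α/2) ‖Δ‖₂² ≤ 3λ ‖Δ_S‖₁`. Hence `α ‖Δ_S‖₁² ≤ 6λ s ‖Δ_S‖₁`, i.e.
`‖Δ_S‖₁ ≤ 6λs/α`, and `‖Δ‖₁ ≤ 4 ‖Δ_S‖₁ ≤ 24λs/α`.
-/

open Matrix Finset

section Lasso

variable {ι n : Type*} [Fintype ι] [Fintype n]

theorem abs_dotProduct_le_norm_mul_sum_abs (ξ Δ : ι → ℝ) :
    |ξ ⬝ᵥ Δ| ≤ ‖ξ‖ * ∑ j, |Δ j| := by
  rw [mul_sum]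
  refine (abs_sum_le_sum_abs _ _).trans (sum_le_sum fun j _ => ?_)
  rw [abs_mul]
  exact mul_le_mul_of_nonneg_right (norm_le_pi_norm ξ j) (abs_nonneg _)

theorem sum_abs_sub_sum_abs_le_of_support [DecidableEq ι] {S : Finset ι} {βstar : ι → ℝ}
    (hsupp : ∀ j ∉ S, βstar j = 0) (β : ι → ℝ) :
    ∑ j, |βstar j| - ∑ j, |β j| ≤
      ∑ j ∈ S, |(β - βstar) j| - ∑ j ∈ Sᶜ, |(β - βstar) j| := by
  have hstar : ∑ j ∈ Sᶜ, |βstar j| = 0 :=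
    sum_eq_zero fun j hj => by simp [hsupp j (mem_compl.mp hj)]
  have hoff : ∑ j ∈ Sᶜ, |(β - βstar) j| = ∑ j ∈ Sᶜ, |β j| :=
    sum_congr rfl fun j hj => by simp [hsupp j (mem_compl.mp hj)]
  have hon : ∑ j ∈ S, |βstar j| - ∑ j ∈ S, |β j| ≤ ∑ j ∈ S, |(β - βstar) j| := by
    rw [← sum_sub_distrib]
    exact sum_le_sum fun j _ => by
      rw [Pi.sub_apply, abs_sub_comm]; exact abs_sub_abs_le_abs_sub _ _
  rw [← sum_add_sum_compl S fun j => |βstar j|, ← sum_add_sum_compl S fun j => |β j|]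
  linarith

theorem sq_sum_abs_le_card_mul_sum_sq (S : Finset ι) (Δ : ι → ℝ) :
    (∑ j ∈ S, |Δ j|) ^ 2 ≤ #S * ∑ j, Δ j ^ 2 :=
  calc (∑ j ∈ S, |Δ j|) ^ 2 ≤ #S * ∑ j ∈ S, |Δ j| ^ 2 := sq_sum_le_card_mul_sum_sq ..
    _ = #S * ∑ j ∈ S, Δ j ^ 2 := by simp only [sq_abs]
    _ ≤ #S * ∑ j, Δ j ^ 2 := by gcongr; exact subset_univ S

theorem sum_abs_le_four_mul_of_cone [DecidableEq ι] {S : Finset ι} {Δ : ι → ℝ}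
    (hcone : ∑ j ∈ Sᶜ, |Δ j| ≤ 3 * ∑ j ∈ S, |Δ j|) :
    ∑ j, |Δ j| ≤ 4 * ∑ j ∈ S, |Δ j| := by
  rw [← sum_add_sum_compl S]
  linarith

theorem Matrix.IsSymm.sub_mulVec_dotProduct_mulVec_sub {W : Matrix n n ℝ} (hW : W.IsSymm)
    (X : Matrix n ι ℝ) (r : n → ℝ) (δ : ι → ℝ) :
    (r - X *ᵥ δ) ⬝ᵥ (W *ᵥ (r - X *ᵥ δ)) =
      r ⬝ᵥ (W *ᵥ r) - 2 * ((Xᵀ *ᵥ (W *ᵥ r)) ⬝ᵥ δ) + δ ⬝ᵥ ((Xᵀ * W * X) *ᵥ δ) := by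
  have hcross : (X *ᵥ δ) ⬝ᵥ (W *ᵥ r) = r ⬝ᵥ (W *ᵥ (X *ᵥ δ)) := by
    rw [dotProduct_mulVec, ← mulVec_transpose, hW.eq, dotProduct_comm]
  have hscore : (Xᵀ *ᵥ (W *ᵥ r)) ⬝ᵥ δ = r ⬝ᵥ (W *ᵥ (X *ᵥ δ)) := by
    rw [mulVec_transpose, ← dotProduct_mulVec, dotProduct_comm, hcross]
  have hgram : δ ⬝ᵥ ((Xᵀ * W * X) *ᵥ δ) = (X *ᵥ δ) ⬝ᵥ (W *ᵥ (X *ᵥ δ)) := by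
    rw [← mulVec_mulVec, ← mulVec_mulVec, dotProduct_mulVec, vecMul_transpose]
  rw [hscore, hgram, mulVec_sub, dotProduct_sub, sub_dotProduct, sub_dotProduct, hcross]
  ring

theorem loss_eq_add_score_add_gram {W : Matrix n n ℝ} (hW : W.IsSymm) {X : Matrix n ι ℝ}
    {Y : n → ℝ} {ν : ℝ} {L : (ι → ℝ) → ℝ}
    (hL : ∀ β, L β = 1 / (2 * ν) * ((Y - X *ᵥ β) ⬝ᵥ (W *ᵥ (Y - X *ᵥ β))))
    {βstar ξ : ι → ℝ} (hξ : ξ = (-(1 / ν)) • (Xᵀ *ᵥ (W *ᵥ (Y - X *ᵥ βstar))))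
    {G : Matrix ι ι ℝ} (hG : G = (1 / ν) • (Xᵀ * W * X)) (β : ι → ℝ) :
    L β = L βstar + ξ ⬝ᵥ (β - βstar) + 1 / 2 * ((β - βstar) ⬝ᵥ (G *ᵥ (β - βstar))) := by
  have hres : Y - X *ᵥ β = (Y - X *ᵥ βstar) - X *ᵥ (β - βstar) := by
    rw [mulVec_sub]; abel
  rw [hL, hL, hres, hW.sub_mulVec_dotProduct_mulVec_sub, hξ, hG, smul_dotProduct, smul_mulVec,
    dotProduct_smul, smul_eq_mul, smul_eq_mul]
  ring

theorem lasso_cone_and_gram_bound [DecidableEq ι] {L : (ι → ℝ) → ℝ} {G : Matrix ι ι ℝ}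
    {ξ βstar βhat : ι → ℝ} {S : Finset ι} {lam : ℝ}
    (hexp : L βhat = L βstar + ξ ⬝ᵥ (βhat - βstar) +
      1 / 2 * ((βhat - βstar) ⬝ᵥ (G *ᵥ (βhat - βstar))))
    (hG : 0 ≤ (βhat - βstar) ⬝ᵥ (G *ᵥ (βhat - βstar)))
    (hsupp : ∀ j ∉ S, βstar j = 0) (hlam : 0 < lam) (hlamξ : 2 * ‖ξ‖ ≤ lam)
    (hmin : L βhat + lam * ∑ j, |βhat j| ≤ L βstar + lam * ∑ j, |βstar j|) :
    ∑ j ∈ Sᶜ, |(βhat - βstar) j| ≤ 3 * ∑ j ∈ S, |(βhat - βstar) j| ∧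
      (βhat - βstar) ⬝ᵥ (G *ᵥ (βhat - βstar)) ≤ 3 * lam * ∑ j ∈ S, |(βhat - βstar) j| := by
  set Δ := βhat - βstar
  have hscore : -(ξ ⬝ᵥ Δ) ≤ lam / 2 * ∑ j, |Δ j| := by
    have := abs_dotProduct_le_norm_mul_sum_abs ξ Δ
    have hΔ : 0 ≤ ∑ j, |Δ j| := sum_nonneg fun j _ => abs_nonneg (Δ j)
    have := mul_le_mul_of_nonneg_right hlamξ hΔ
    linarith [neg_le_abs (ξ ⬝ᵥ Δ)]
  have hpen := mul_le_mul_of_nonneg_left (sum_abs_sub_sum_abs_le_of_support hsupp βhat) hlam.le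
  have hsplit : ∑ j, |Δ j| = ∑ j ∈ S, |Δ j| + ∑ j ∈ Sᶜ, |Δ j| := (sum_add_sum_compl S _).symm
  have hSc : 0 ≤ ∑ j ∈ Sᶜ, |Δ j| := sum_nonneg fun j _ => abs_nonneg _
  have hbasic : 1 / 2 * (Δ ⬝ᵥ (G *ᵥ Δ)) ≤
      lam / 2 * ∑ j, |Δ j| + lam * (∑ j ∈ S, |Δ j| - ∑ j ∈ Sᶜ, |Δ j|) := by
    linarith
  refine ⟨le_of_mul_le_mul_left ?_ hlam, ?_⟩ <;> nlinarith

theorem sum_abs_le_of_restricted_strong_convexity [DecidableEq ι] {S : Finset ι} {Δ : ι → ℝ}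
    {q lam α κ : ℝ} (hcone : ∑ j ∈ Sᶜ, |Δ j| ≤ 3 * ∑ j ∈ S, |Δ j|)
    (hq : q ≤ 3 * lam * ∑ j ∈ S, |Δ j|)
    (hRSC : α * ∑ j, Δ j ^ 2 - κ * (∑ j, |Δ j|) ^ 2 ≤ q)
    (hlam : 0 ≤ lam) (hα : 0 < α) (hκ : 0 ≤ κ) (hκS : 16 * κ * #S ≤ α / 2) :
    ∑ j, |Δ j| ≤ 24 * lam * #S / α := by
  set a := ∑ j, |Δ j|
  set aS := ∑ j ∈ S, |Δ j|
  set b := ∑ j, Δ j ^ 2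
  have ha : a ≤ 4 * aS := sum_abs_le_four_mul_of_cone hcone
  have hCS : aS ^ 2 ≤ #S * b := sq_sum_abs_le_card_mul_sum_sq S Δ
  have haS : 0 ≤ aS := sum_nonneg fun j _ => abs_nonneg (Δ j)
  have ha0 : 0 ≤ a := sum_nonneg fun j _ => abs_nonneg (Δ j)
  have hb : 0 ≤ b := sum_nonneg fun j _ => sq_nonneg (Δ j)
  have habsorb : κ * a ^ 2 ≤ α / 2 * b :=
    calc κ * a ^ 2 ≤ κ * (4 * aS) ^ 2 := by gcongr
      _ = 16 * κ * aS ^ 2 := by ring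
      _ ≤ 16 * κ * (#S * b) := by gcongr
      _ ≤ α / 2 * b := by nlinarith
  have hl2 : α / 2 * b ≤ 3 * lam * aS := by linarith
  have hsupport : α * aS ≤ 6 * lam * #S := by
    rcases haS.eq_or_lt with h | h
    · rw [← h, mul_zero]; positivity
    · nlinarith
  rw [le_div_iff₀ hα]
  nlinarith

end Lasso

theorem deterministic_l1_estimation_bound_general (N p s : ℕ)
    (X : Matrix (Fin N) (Fin p) ℝ)
    (Wt : Matrix (Fin N) (Fin N) ℝ) (hWt : Wt.PosSemidef)
    (Y : Fin N → ℝ) (βstar : Fin p → ℝ)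
    (L : (Fin p → ℝ) → ℝ)
    (hL : ∀ β, L β = (1 / (2 * (N : ℝ))) *
      ((Y - X *ᵥ β) ⬝ᵥ (Wt *ᵥ (Y - X *ᵥ β))))
    (ξ : Fin p → ℝ)
    (hξ : ξ = (-(1 / (N : ℝ))) • (Xᵀ *ᵥ (Wt *ᵥ (Y - X *ᵥ βstar))))
    (G : Matrix (Fin p) (Fin p) ℝ)
    (hG : G = (1 / (N : ℝ)) • (Xᵀ * Wt * X))
    (S : Finset (Fin p)) (hcard : S.card = s)
    (hsupp : ∀ j ∉ S, βstar j = 0)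
    (lam α κ : ℝ) (hlam : 0 < lam) (hα : 0 < α) (hκ : 0 ≤ κ)
    (hlamξ : 2 * ‖ξ‖ ≤ lam)
    (hRSC : ∀ Δ : Fin p → ℝ, (∑ j ∈ Sᶜ, |Δ j|) ≤ 3 * (∑ j ∈ S, |Δ j|) →
      α * (∑ j, (Δ j) ^ 2) - κ * (∑ j, |Δ j|) ^ 2 ≤ Δ ⬝ᵥ (G *ᵥ Δ))
    (hκs : 16 * κ * s ≤ α / 2)
    (βhat : Fin p → ℝ)
    (hmin : ∀ β : Fin p → ℝ,
      L βhat + lam * (∑ j, |βhat j|) ≤ L β + lam * (∑ j, |β j|)) :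
    (∑ j, |βhat j - βstar j|) ≤ 24 * lam * s / α := by
  have hexp := loss_eq_add_score_add_gram (isHermitian_iff_isSymm.mp hWt.1) hL hξ hG βhat
  have hGpsd : G.PosSemidef := by
    simpa [hG] using (hWt.conjTranspose_mul_mul_same X).smul (by positivity : (0 : ℝ) ≤ 1 / N)
  have hq : 0 ≤ (βhat - βstar) ⬝ᵥ (G *ᵥ (βhat - βstar)) := by
    simpa using hGpsd.dotProduct_mulVec_nonneg (βhat - βstar)
  obtain ⟨hcone, hgram⟩ := lasso_cone_and_gram_bound hexp hq hsupp hlam hlamξ (hmin βstar)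
  subst hcard
  exact sum_abs_le_of_restricted_strong_convexity hcone hgram (hRSC _ hcone) hlam.le hα hκ hκs

/-- Deterministic ℓ1 estimation bound (core of Theorem 2 of the paper).
Let `L(β) = (1/(2N)) (Y − Xβ)ᵀ W̃ (Y − Xβ)` with score
`ξ = −(1/N) Xᵀ W̃ (Y − Xβ*)` and Gram matrix `G = (1/N) Xᵀ W̃ X`, and let `β̂`
be a global minimizer of `Q(β) = L(β) + λ‖β‖₁`.  If `β*` is supported on `S`
with `|S| = s ≥ 1`, `λ ≥ 2‖ξ‖_∞`, restricted strong convexity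
`Δᵀ G Δ ≥ α‖Δ‖₂² − κ‖Δ‖₁²` holds on the cone `‖Δ_{S^c}‖₁ ≤ 3‖Δ_S‖₁` with
`α > 0`, `κ ≥ 0`, and `16κs ≤ α/2`, then `‖β̂ − β*‖₁ ≤ 24λs/α`.
(The sup norm `‖ξ‖` below is the norm of the Pi type `Fin p → ℝ`.) -/
theorem deterministic_l1_estimation_bound (N p s : ℕ) (hN : 0 < N) (hp : 0 < p)
    (X : Matrix (Fin N) (Fin p) ℝ)
    (Wt : Matrix (Fin N) (Fin N) ℝ) (hWt : Wt.PosSemidef)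
    (Y : Fin N → ℝ) (βstar : Fin p → ℝ)
    (L : (Fin p → ℝ) → ℝ)
    (hL : ∀ β, L β = (1 / (2 * (N : ℝ))) *
      ((Y - X *ᵥ β) ⬝ᵥ (Wt *ᵥ (Y - X *ᵥ β))))
    (ξ : Fin p → ℝ)
    (hξ : ξ = (-(1 / (N : ℝ))) • (Xᵀ *ᵥ (Wt *ᵥ (Y - X *ᵥ βstar))))
    (G : Matrix (Fin p) (Fin p) ℝ)
    (hG : G = (1 / (N : ℝ)) • (Xᵀ * Wt * X))
    (S : Finset (Fin p)) (hcard : S.card = s) (hs : 1 ≤ s)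
    (hsupp : ∀ j ∉ S, βstar j = 0)
    (lam α κ : ℝ) (hlam : 0 < lam) (hα : 0 < α) (hκ : 0 ≤ κ)
    (hlamξ : 2 * ‖ξ‖ ≤ lam)
    (hRSC : ∀ Δ : Fin p → ℝ, (∑ j ∈ Sᶜ, |Δ j|) ≤ 3 * (∑ j ∈ S, |Δ j|) →
      α * (∑ j, (Δ j) ^ 2) - κ * (∑ j, |Δ j|) ^ 2 ≤ Δ ⬝ᵥ (G *ᵥ Δ))
    (hκs : 16 * κ * s ≤ α / 2)
    (βhat : Fin p → ℝ)
    (hmin : ∀ β : Fin p → ℝ,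
      L βhat + lam * (∑ j, |βhat j|) ≤ L β + lam * (∑ j, |β j|)) :
    (∑ j, |βhat j - βstar j|) ≤ 24 * lam * s / α :=
  deterministic_l1_estimation_bound_general N p s X Wt hWt Y βstar L hL ξ hξ G hG S hcard hsupp lam
    α κ hlam hα hκ hlamξ hRSC hκs βhat hmin
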